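/- Let V be a complex inner product space, let (a_n)_{n∈ℤ} be a family of linear maps a_n : V → V, and let R : V → V be a linear map such that there exist a constant M > 0 and a natural number s with ‖a_n b‖ ≤ M·(|n| + 1)^s·‖R b‖ for all n ∈ ℤ and all b ∈ V. Let f : ℝ → ℂ be a smooth 2π-periodic function with Fourier coefficients f̂_n. Then for every b ∈ V the series Σ_{n∈ℤ} f̂_n a_n b converges absolutely in the completion of V, the resulting map Y₀(f) : b ↦ Σ_{n∈ℤ} f̂_n a_n b is linear, and it satisfies the energy bound ‖Y₀(f) b‖ ≤ M·(Σ_{n∈ℤ} (|n|+1)^s |f̂_n|)·‖R b‖ for all b ∈ V, where the constant Σ_{n∈ℤ} (|n|+1)^s |f̂_n| is finite. -/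

import Mathlib

/-! Integrating by parts against `e^{-inθ}`, with periodicity killing the boundary terms, gives
`(f^{(k)})^_n = (in)^k f̂_n`; since the coefficients of the continuous `f^{(k)}` are bounded by
its supremum, `|n|^k |f̂_n|` is bounded for every `k`. Taking `k = s + 2` and comparing with
`Σ 1/n²` makes the weights `(|n|+1)^s |f̂_n|` summable, and the energy bound then makes
`Σ f̂_n a_n b` absolutely convergent in the complete space `Completion V`. -/

open Real MeasureTheory

/-- The `n`-th Fourier coefficient of a `2π`-periodic function `f : ℝ → ℂ`:
`f̂_n = (1/2π) ∫₀^{2π} f(θ) e^{-inθ} dθ`. -/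
noncomputable def fourierCoefficient (f : ℝ → ℂ) (n : ℤ) : ℂ :=
  (1 / (2 * Real.pi)) * ∫ θ in (0:ℝ)..(2 * Real.pi), f θ * Complex.exp (-Complex.I * n * θ)

open Complex in
theorem fourierCoefficient_eq_fourierCoeffOn (f : ℝ → ℂ) (n : ℤ) :
    fourierCoefficient f n = fourierCoeffOn two_pi_pos f n := by
  rw [fourierCoefficient, fourierCoeffOn_eq_integral, sub_zero, real_smul]
  push_cast
  congr 1
  refine intervalIntegral.integral_congr fun x _ => ?_
  rw [fourier_coe_apply, smul_eq_mul, mul_comm]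
  congr 2
  push_cast
  field_simp

theorem Function.Periodic.deriv {𝕜 F : Type*} [NontriviallyNormedField 𝕜] [NormedAddCommGroup F]
    [NormedSpace 𝕜 F] {f : 𝕜 → F} {c : 𝕜} (h : Function.Periodic f c) :
    Function.Periodic (deriv f) c := fun x => by
  rw [← deriv_comp_add_const, funext h]

open Complex in
theorem fourierCoefficient_deriv {f : ℝ → ℂ} (hf : ContDiff ℝ 1 f)
    (hper : Function.Periodic f (2 * π)) {n : ℤ} (hn : n ≠ 0) :
    fourierCoefficient (deriv f) n = I * n * fourierCoefficient f n := by
  have hcycle : f (2 * π) - f 0 = 0 := by simpa using sub_eq_zero.2 (hper 0)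
  rw [fourierCoefficient_eq_fourierCoeffOn, fourierCoefficient_eq_fourierCoeffOn,
    fourierCoeffOn_of_hasDerivAt two_pi_pos hn
      (fun x _ => (hf.differentiable one_ne_zero x).hasDerivAt)
      ((hf.continuous_deriv le_rfl).intervalIntegrable _ _), hcycle]
  have : (n : ℂ) ≠ 0 := Int.cast_ne_zero.2 hn
  field_simp
  push_cast
  ring

theorem fourierCoefficient_iteratedDeriv {k : ℕ} {f : ℝ → ℂ} (hf : ContDiff ℝ k f)
    (hper : Function.Periodic f (2 * π)) {n : ℤ} (hn : n ≠ 0) :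
    fourierCoefficient (iteratedDeriv k f) n = (Complex.I * n) ^ k * fourierCoefficient f n := by
  induction k generalizing f with
  | zero => simp
  | succ k ih =>
    rw [Nat.cast_succ, contDiff_succ_iff_deriv] at hf
    rw [iteratedDeriv_succ', ih hf.2.2 hper.deriv,
      fourierCoefficient_deriv (contDiff_one_iff_deriv.2 ⟨hf.1, hf.2.2.continuous⟩) hper hn]
    ring

theorem norm_fourierCoefficient_le {g : ℝ → ℂ} {C : ℝ} (h : ∀ x ∈ Set.Ioc 0 (2 * π), ‖g x‖ ≤ C)
    (n : ℤ) : ‖fourierCoefficient g n‖ ≤ C := by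
  have hbound : ∀ x ∈ Set.uIoc 0 (2 * π), ‖g x * Complex.exp (-Complex.I * n * x)‖ ≤ C := by
    intro x hx
    rw [Set.uIoc_of_le two_pi_pos.le] at hx
    simpa [Complex.norm_exp] using h x hx
  calc ‖fourierCoefficient g n‖
      ≤ 1 / (2 * π) * (C * |2 * π - 0|) := by
        rw [fourierCoefficient, norm_mul]
        gcongr
        · simp [abs_of_pos pi_pos]
        · exact intervalIntegral.norm_integral_le_of_norm_le_const hbound
    _ = C := by rw [sub_zero, abs_of_pos two_pi_pos]; field_simp

theorem exists_abs_pow_mul_norm_fourierCoefficient_le {k : ℕ} {f : ℝ → ℂ} (hf : ContDiff ℝ k f)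
    (hper : Function.Periodic f (2 * π)) :
    ∃ C, ∀ n : ℤ, n ≠ 0 → |(n : ℝ)| ^ k * ‖fourierCoefficient f n‖ ≤ C := by
  obtain ⟨C, hC⟩ := isCompact_Icc.exists_bound_of_continuousOn
    (hf.continuous_iteratedDeriv k le_rfl).continuousOn
  refine ⟨C, fun n hn => ?_⟩
  have := norm_fourierCoefficient_le (fun x hx => hC x (Set.Ioc_subset_Icc_self hx)) n
  rwa [fourierCoefficient_iteratedDeriv hf hper hn, norm_mul, norm_pow, norm_mul, Complex.norm_I,
    one_mul, Complex.norm_intCast] at this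

theorem summable_one_add_abs_pow_mul_norm_fourierCoefficient {s : ℕ} {f : ℝ → ℂ}
    (hf : ContDiff ℝ (s + 2 : ℕ) f) (hper : Function.Periodic f (2 * π)) :
    Summable fun n : ℤ => (|(n : ℝ)| + 1) ^ s * ‖fourierCoefficient f n‖ := by
  obtain ⟨C, hC⟩ := exists_abs_pow_mul_norm_fourierCoefficient_le hf hper
  refine .of_norm_bounded_eventually
    ((summable_one_div_int_pow.2 one_lt_two).mul_left (2 ^ s * C)) ?_
  filter_upwards [Filter.eventually_cofinite_ne 0] with n hn
  have hle : |(n : ℝ)| + 1 ≤ 2 * |(n : ℝ)| := by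
    have : (1 : ℝ) ≤ |(n : ℝ)| := by exact_mod_cast Int.one_le_abs hn
    linarith
  calc ‖(|(n : ℝ)| + 1) ^ s * ‖fourierCoefficient f n‖‖
      = (|(n : ℝ)| + 1) ^ s * ‖fourierCoefficient f n‖ := Real.norm_of_nonneg (by positivity)
    _ ≤ (2 * |(n : ℝ)|) ^ s * ‖fourierCoefficient f n‖ := by gcongr
    _ = 2 ^ s * (|(n : ℝ)| ^ (s + 2) * ‖fourierCoefficient f n‖) / (n : ℝ) ^ 2 := by
        rw [pow_add, sq_abs, mul_pow]
        field_simp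
    _ ≤ 2 ^ s * C * (1 / (n : ℝ) ^ 2) := by
        rw [mul_one_div]
        gcongr
        exact hC n hn

section Smearing

open UniformSpace

variable {ι 𝕜 V W : Type*} [NormedField 𝕜] [NormedAddCommGroup V] [NormedSpace 𝕜 V]
  [NormedAddCommGroup W]

noncomputable def smearedOperator (c : ι → 𝕜) (a : ι → V →ₗ[𝕜] V)
    (hc : ∀ b, Summable fun n => ‖c n • a n b‖) : V →ₗ[𝕜] Completion V where
  toFun b := ∑' n, ((c n • a n b : V) : Completion V)
  map_add' x y := by
    have hsum b : Summable fun n => ((c n • a n b : V) : Completion V) :=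
      .of_norm (by simpa only [Completion.norm_coe] using hc b)
    rw [← (hsum x).tsum_add (hsum y)]
    simp only [map_add, smul_add, Completion.coe_add]
  map_smul' r x := by
    have hsum : Summable fun n => ((c n • a n x : V) : Completion V) :=
      .of_norm (by simpa only [Completion.norm_coe] using hc x)
    rw [RingHom.id_apply, ← hsum.tsum_const_smul r]
    simp only [map_smul, smul_comm (c _) r, Completion.coe_smul]

variable {c : ι → 𝕜} {a : ι → V →ₗ[𝕜] V} {R : V → W} {M : ℝ} {w : ι → ℝ}

theorem norm_smul_apply_le_of_energy_bound (hbound : ∀ n b, ‖a n b‖ ≤ M * w n * ‖R b‖)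
    (n : ι) (b : V) : ‖c n • a n b‖ ≤ M * ‖R b‖ * (w n * ‖c n‖) := by
  rw [norm_smul]
  calc ‖c n‖ * ‖a n b‖ ≤ ‖c n‖ * (M * w n * ‖R b‖) := by gcongr; exact hbound n b
    _ = M * ‖R b‖ * (w n * ‖c n‖) := by ring

theorem summable_norm_smul_apply_of_energy_bound (hbound : ∀ n b, ‖a n b‖ ≤ M * w n * ‖R b‖)
    (hw : Summable fun n => w n * ‖c n‖) (b : V) : Summable fun n => ‖c n • a n b‖ :=
  .of_nonneg_of_le (fun _ => norm_nonneg _) (norm_smul_apply_le_of_energy_bound hbound · b)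
    (hw.mul_left _)

theorem norm_smearedOperator_le (hbound : ∀ n b, ‖a n b‖ ≤ M * w n * ‖R b‖)
    (hw : Summable fun n => w n * ‖c n‖) (b : V) :
    ‖smearedOperator c a (summable_norm_smul_apply_of_energy_bound hbound hw) b‖ ≤
      M * (∑' n, w n * ‖c n‖) * ‖R b‖ := by
  calc ‖∑' n, ((c n • a n b : V) : Completion V)‖ ≤ M * ‖R b‖ * ∑' n, w n * ‖c n‖ :=
        tsum_of_norm_bounded (hw.hasSum.mul_left _) fun n => by
          simpa only [Completion.norm_coe] using norm_smul_apply_le_of_energy_bound hbound n b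
    _ = M * (∑' n, w n * ‖c n‖) * ‖R b‖ := by ring

end Smearing

theorem smeared_operator_exists_general {V : Type*} [NormedAddCommGroup V] [InnerProductSpace ℂ V]
    (a : ℤ → V →ₗ[ℂ] V) (R : V →ₗ[ℂ] V) (M : ℝ) (s : ℕ)
    (hbound : ∀ (n : ℤ) (b : V), ‖a n b‖ ≤ M * (|(n : ℝ)| + 1) ^ s * ‖R b‖)
    (f : ℝ → ℂ) (hf : ContDiff ℝ (⊤ : ℕ∞) f)
    (hper : Function.Periodic f (2 * Real.pi)) :
    Summable (fun n : ℤ => (|(n : ℝ)| + 1) ^ s * ‖fourierCoefficient f n‖) ∧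
    (∀ b : V, Summable (fun n : ℤ => ‖fourierCoefficient f n • a n b‖)) ∧
    ∃ Y : V →ₗ[ℂ] UniformSpace.Completion V,
      (∀ b : V,
        Y b = ∑' n : ℤ, ((fourierCoefficient f n • a n b : V) : UniformSpace.Completion V)) ∧
      ∀ b : V,
        ‖Y b‖ ≤ M * (∑' n : ℤ, (|(n : ℝ)| + 1) ^ s * ‖fourierCoefficient f n‖) * ‖R b‖ := by
  have hw := summable_one_add_abs_pow_mul_norm_fourierCoefficient (s := s)
    (hf.of_le (WithTop.coe_le_coe.2 le_top)) hper
  exact ⟨hw, summable_norm_smul_apply_of_energy_bound hbound hw, _, fun _ => rfl,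
    norm_smearedOperator_le hbound hw⟩

/-- Given linear maps `a_n : V → V` on a complex inner product space satisfying the energy
bound `‖a_n b‖ ≤ M (|n|+1)^s ‖R b‖` and a smooth `2π`-periodic `f`, the series
`Σ_{n∈ℤ} f̂_n a_n b` converges absolutely in the completion of `V`, the resulting map
`Y₀(f) : b ↦ Σ_{n∈ℤ} f̂_n a_n b` is linear, and it satisfies the energy bound
`‖Y₀(f) b‖ ≤ M (Σ_{n∈ℤ} (|n|+1)^s |f̂_n|) ‖R b‖`, the constant being finite. -/
theorem smeared_operator_exists {V : Type*} [NormedAddCommGroup V] [InnerProductSpace ℂ V]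
    (a : ℤ → V →ₗ[ℂ] V) (R : V →ₗ[ℂ] V) (M : ℝ) (hM : 0 < M) (s : ℕ)
    (hbound : ∀ (n : ℤ) (b : V), ‖a n b‖ ≤ M * (|(n : ℝ)| + 1) ^ s * ‖R b‖)
    (f : ℝ → ℂ) (hf : ContDiff ℝ (⊤ : ℕ∞) f)
    (hper : Function.Periodic f (2 * Real.pi)) :
    Summable (fun n : ℤ => (|(n : ℝ)| + 1) ^ s * ‖fourierCoefficient f n‖) ∧
    (∀ b : V, Summable (fun n : ℤ => ‖fourierCoefficient f n • a n b‖)) ∧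
    ∃ Y : V →ₗ[ℂ] UniformSpace.Completion V,
      (∀ b : V,
        Y b = ∑' n : ℤ, ((fourierCoefficient f n • a n b : V) : UniformSpace.Completion V)) ∧
      ∀ b : V,
        ‖Y b‖ ≤ M * (∑' n : ℤ, (|(n : ℝ)| + 1) ^ s * ‖fourierCoefficient f n‖) * ‖R b‖ :=
  smeared_operator_exists_general a R M s hbound f hf hper
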